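/- arXiv:1808.03451 — 9 statements merged into one kernel-verified Lean document; each statement's English description precedes it below -/
import Mathlib

section
/- Let f be a homogeneous polynomial of degree D and g a homogeneous polynomial of degree D' in the complex variables x_0,…,x_n. Then ‖f·g‖_sym ≤ ‖f‖_sym · ‖g‖_sym. -/
/-! Weighting the coefficients by multinomial coefficients, `‖p‖²_sym = Σ_I |a_I|² / multinomial I`.
The coefficient `c_K = Σ_{I+J=K} a_I b_J` of `f g` is bounded by Cauchy–Schwarz (in Sedrakyan's
form) with weights `multinomial I · multinomial J`. Since `|I| = D` and `|J| = D'`, these weights sum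
to at most `multinomial K`: comparing coefficients of `x^K` in
`(Σ x_i)^(D+D') = (Σ x_i)^D (Σ x_i)^D'` is a Vandermonde identity for multinomial coefficients.
Hence `|c_K|² / multinomial K ≤ Σ_{I+J=K} (|a_I|² / multinomial I) (|b_J|² / multinomial J)`, and
summing over `K` gives `‖f g‖²_sym ≤ ‖f‖²_sym ‖g‖²_sym`. -/

open Finset

/-- The symmetric (Bombieri) norm of a polynomial in `n+1` complex variables:
`‖f‖_sym = (Σ_I |a_I|² · (i_0!⋯i_n!)/(|I|)!)^{1/2}`. For a homogeneous polynomial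
of degree `D`, `|I| = D` for every `I` in the support. -/
noncomputable def symNorm {n : ℕ} (f : MvPolynomial (Fin (n + 1)) ℂ) : ℝ :=
  Real.sqrt (∑ I ∈ f.support,
    ‖MvPolynomial.coeff I f‖ ^ 2 *
      ((∏ k, Nat.factorial (I k) : ℕ) : ℝ) / (Nat.factorial (∑ k, I k) : ℝ))

theorem Finsupp.multinomial_pos {σ : Type*} (I : σ →₀ ℕ) : 0 < I.multinomial :=
  Nat.multinomial_pos _ _

theorem Finsupp.prod_factorial_mul_multinomial {σ : Type*} [Fintype σ] (I : σ →₀ ℕ) :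
    (∏ k, (I k).factorial) * I.multinomial = (∑ k, I k).factorial := by
  rw [← Finsupp.multinomial_of_support_subset (subset_univ _)]
  exact Nat.multinomial_spec _ _

open MvPolynomial in
theorem Finsupp.sum_antidiagonal_multinomial_mul_multinomial {σ : Type*} [Fintype σ]
    [DecidableEq σ] (K : σ →₀ ℕ) (D D' : ℕ) :
    ∑ x ∈ antidiagonal K with x.1.degree = D ∧ x.2.degree = D',
      x.1.multinomial * x.2.multinomial = if K.degree = D + D' then K.multinomial else 0 := by
  have hdeg (d : σ →₀ ℕ) : (d.sum fun _ m => m) = d.degree := rfl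
  have h := congrArg (coeff K) (pow_add (∑ i, X i : MvPolynomial σ ℕ) D D')
  simp only [coeff_mul, coeff_sum_X_pow_of_fintype, hdeg, Nat.cast_id] at h
  rw [h, sum_filter]
  refine Finset.sum_congr rfl fun x _ => ?_
  split_ifs <;> simp_all

namespace MvPolynomial

variable {σ R : Type*}

theorem coeff_mul_eq_sum_support [CommSemiring R] [DecidableEq σ] (p q : MvPolynomial σ R)
    (K : σ →₀ ℕ) :
    coeff K (p * q) =
      ∑ x ∈ p.support ×ˢ q.support with x.1 + x.2 = K, coeff x.1 p * coeff x.2 q := by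
  rw [coeff_mul]
  refine (sum_subset (fun x hx => ?_) fun x _ hx => ?_).symm
  · simp only [mem_filter] at hx
    exact HasAntidiagonal.mem_antidiagonal.2 hx.2
  · simp only [mem_filter, mem_product, mem_support_iff,
      HasAntidiagonal.mem_antidiagonal.1 ‹_›, and_true, not_and_or, not_not] at hx
    rcases hx with h | h <;> simp [h]

variable [NormedCommRing R]

noncomputable def bombieriNormSq (p : MvPolynomial σ R) : ℝ :=
  ∑ I ∈ p.support, ‖coeff I p‖ ^ 2 / I.multinomial

theorem bombieriNormSq_nonneg (p : MvPolynomial σ R) : 0 ≤ bombieriNormSq p :=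
  sum_nonneg fun _ _ => by positivity

theorem norm_coeff_mul_sq_div_multinomial_le [Fintype σ] [DecidableEq σ]
    {p q : MvPolynomial σ R} {D D' : ℕ} (hp : p.IsHomogeneous D) (hq : q.IsHomogeneous D')
    (K : σ →₀ ℕ) :
    ‖coeff K (p * q)‖ ^ 2 / K.multinomial ≤
      ∑ x ∈ p.support ×ˢ q.support with x.1 + x.2 = K,
        ‖coeff x.1 p‖ ^ 2 / x.1.multinomial * (‖coeff x.2 q‖ ^ 2 / x.2.multinomial) := by
  set S := {x ∈ p.support ×ˢ q.support | x.1 + x.2 = K}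
  have hcoeff : ‖coeff K (p * q)‖ ≤ ∑ x ∈ S, ‖coeff x.1 p‖ * ‖coeff x.2 q‖ := by
    rw [coeff_mul_eq_sum_support]
    exact (norm_sum_le _ _).trans (sum_le_sum fun x _ => norm_mul_le _ _)
  have hweight : ∑ x ∈ S, (x.1.multinomial * x.2.multinomial : ℝ) ≤ K.multinomial := by
    have hsub : S ⊆ {x ∈ antidiagonal K | x.1.degree = D ∧ x.2.degree = D'} := by
      intro x hx
      simp only [S, mem_filter, mem_product] at hx
      simp only [mem_filter, HasAntidiagonal.mem_antidiagonal]
      exact ⟨hx.2, (hp.degree_eq_sum_deg_support hx.1.1).symm,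
        (hq.degree_eq_sum_deg_support hx.1.2).symm⟩
    have := (sum_le_sum_of_subset hsub).trans_eq
      (K.sum_antidiagonal_multinomial_mul_multinomial D D')
    exact_mod_cast this.trans (by split_ifs <;> simp)
  rcases S.eq_empty_or_nonempty with hS | hS
  · rw [hS, sum_empty, norm_le_zero_iff] at hcoeff
    simp [hcoeff, hS]
  have hm (I : σ →₀ ℕ) : (0 : ℝ) < I.multinomial := mod_cast I.multinomial_pos
  have hpos : 0 < ∑ x ∈ S, (x.1.multinomial * x.2.multinomial : ℝ) :=
    sum_pos (fun x _ => mul_pos (hm x.1) (hm x.2)) hS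
  calc ‖coeff K (p * q)‖ ^ 2 / K.multinomial
      ≤ (∑ x ∈ S, ‖coeff x.1 p‖ * ‖coeff x.2 q‖) ^ 2 /
          ∑ x ∈ S, (x.1.multinomial * x.2.multinomial : ℝ) :=
        div_le_div₀ (by positivity) (pow_le_pow_left₀ (norm_nonneg _) hcoeff 2) hpos hweight
    _ ≤ ∑ x ∈ S, (‖coeff x.1 p‖ * ‖coeff x.2 q‖) ^ 2 / (x.1.multinomial * x.2.multinomial) :=
        sq_sum_div_le_sum_sq_div _ _ fun x _ => mul_pos (hm x.1) (hm x.2)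
    _ = _ := sum_congr rfl fun x _ => by rw [mul_pow, mul_div_mul_comm]

theorem bombieriNormSq_mul_le [Fintype σ] {p q : MvPolynomial σ R} {D D' : ℕ}
    (hp : p.IsHomogeneous D) (hq : q.IsHomogeneous D') :
    bombieriNormSq (p * q) ≤ bombieriNormSq p * bombieriNormSq q := by
  classical
  calc bombieriNormSq (p * q)
      ≤ ∑ K ∈ (p * q).support, ∑ x ∈ p.support ×ˢ q.support with x.1 + x.2 = K,
          ‖coeff x.1 p‖ ^ 2 / x.1.multinomial * (‖coeff x.2 q‖ ^ 2 / x.2.multinomial) :=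
        sum_le_sum fun K _ => norm_coeff_mul_sq_div_multinomial_le hp hq K
    _ ≤ ∑ x ∈ p.support ×ˢ q.support,
          ‖coeff x.1 p‖ ^ 2 / x.1.multinomial * (‖coeff x.2 q‖ ^ 2 / x.2.multinomial) :=
        sum_fiberwise_le_sum_of_sum_fiber_nonneg fun _ _ => sum_nonneg fun _ _ => by positivity
    _ = bombieriNormSq p * bombieriNormSq q := by
        rw [bombieriNormSq, bombieriNormSq, sum_mul_sum, sum_product]

end MvPolynomial

open MvPolynomial

theorem symNorm_eq_sqrt_bombieriNormSq {n : ℕ} (f : MvPolynomial (Fin (n + 1)) ℂ) :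
    symNorm f = √(bombieriNormSq f) := by
  unfold symNorm bombieriNormSq
  congr 1
  refine sum_congr rfl fun I _ => ?_
  rw [← I.prod_factorial_mul_multinomial]
  have : (I.multinomial : ℝ) ≠ 0 := mod_cast I.multinomial_pos.ne'
  push_cast
  field_simp

theorem stmt_1 (n D D' : ℕ) (f g : MvPolynomial (Fin (n + 1)) ℂ)
    (hf : f.IsHomogeneous D) (hg : g.IsHomogeneous D') :
    symNorm (f * g) ≤ symNorm f * symNorm g := by
  simp only [symNorm_eq_sqrt_bombieriNormSq]
  rw [← Real.sqrt_mul (bombieriNormSq_nonneg f)]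
  exact Real.sqrt_le_sqrt (bombieriNormSq_mul_le hf hg)
end

section
/- For all integers n ≥ 1 and D ≥ 0, one has C(n,D) = Σ_{m=0}^{D} ( C(n−1,m) − r(n−1,m)·log C(D,m) ), where C(D,m) denotes the binomial coefficient 'D choose m'. -/
open Finset

/-- `C(n,D) = Σ_{i_0+⋯+i_n = D} log((i_0!⋯i_n!)/D!)`. -/
noncomputable def Cconst (n D : ℕ) : ℝ :=
  ∑ i ∈ Finset.Nat.antidiagonalTuple (n + 1) D,
    Real.log (((∏ k, Nat.factorial (i k) : ℕ) : ℝ) / (Nat.factorial D : ℝ))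

/-! Split off the first coordinate of a tuple `(i_0, …, i_n)` summing to `D`: if `i_0 = D - m`, the
rest is an `n`-tuple summing to `m`, and `i_0! ⋯ i_n! / D! = (i_1! ⋯ i_n! / m!) / C(D, m)`.
Summing the logarithm over the `r(n-1, m)` such tuples gives the `m`-th term. -/

open scoped Nat
open Real

namespace Finset.Nat

variable {M : Type*} [AddCommMonoid M]

theorem sum_antidiagonalTuple_succ (k n : ℕ) (f : (Fin (k + 1) → ℕ) → M) :
    ∑ x ∈ antidiagonalTuple (k + 1) n, f x =
      ∑ p ∈ antidiagonal n, ∑ y ∈ antidiagonalTuple k p.2, f (Fin.cons p.1 y) := by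
  rw [sum_sigma']
  refine sum_nbij' (fun x => ⟨(x 0, n - x 0), Fin.tail x⟩) (fun q => Fin.cons q.1.1 q.2)
    ?_ ?_ (fun x _ => Fin.cons_self_tail x) ?_ (fun x _ => by simp only [Fin.cons_self_tail])
  · intro x hx
    simp only [mem_antidiagonalTuple, Fin.sum_univ_succ] at hx
    simp only [mem_sigma, HasAntidiagonal.mem_antidiagonal, mem_antidiagonalTuple]
    exact ⟨by omega, by simp only [Fin.tail]; omega⟩
  · rintro ⟨p, y⟩ hq
    simp only [mem_sigma, HasAntidiagonal.mem_antidiagonal, mem_antidiagonalTuple] at hq ⊢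
    simp only [Fin.sum_univ_succ, Fin.cons_zero, Fin.cons_succ]
    omega
  · rintro ⟨p, y⟩ hq
    simp only [mem_sigma, HasAntidiagonal.mem_antidiagonal] at hq
    simp only [Fin.cons_zero, Fin.tail_cons]
    congr
    omega

theorem sum_antidiagonal_snd (g : ℕ → M) (n : ℕ) :
    ∑ p ∈ antidiagonal n, g p.2 = ∑ m ∈ range (n + 1), g m := by
  rw [← sum_antidiagonal_swap, sum_antidiagonal_eq_sum_range_succ_mk]
  rfl

theorem card_antidiagonalTuple_succ (k n : ℕ) :
    #(antidiagonalTuple (k + 1) n) = (k + n).choose k := by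
  induction k generalizing n with
  | zero => simp [antidiagonalTuple_one]
  | succ k ih =>
    rw [card_eq_sum_ones, sum_antidiagonalTuple_succ]
    simp only [← card_eq_sum_ones, ih]
    rw [sum_antidiagonal_snd (fun m => (k + m).choose k), show k + 1 + n = n + k + 1 by ring,
      ← Nat.sum_range_add_choose]
    exact sum_congr rfl fun m _ => by rw [Nat.add_comm]

end Finset.Nat

theorem log_factorial_mul_div_factorial_add (a b : ℕ) {x : ℝ} (hx : x ≠ 0) :
    log (a ! * x / (a + b)!) = log (x / b !) - log ((a + b).choose b) := by
  have hchoose : ((a + b).choose b : ℝ) ≠ 0 :=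
    Nat.cast_ne_zero.mpr (Nat.choose_pos (Nat.le_add_left b a)).ne'
  rw [← log_div (div_ne_zero hx (by positivity)) hchoose,
    ← Nat.add_choose_mul_factorial_mul_factorial]
  push_cast
  field_simp

theorem stmt_5 (n D : ℕ) (hn : 1 ≤ n) :
    Cconst n D = ∑ m ∈ Finset.range (D + 1),
      (Cconst (n - 1) m - (Nat.choose (n - 1 + m) (n - 1) : ℝ) * Real.log (Nat.choose D m)) := by
  obtain ⟨k, rfl⟩ : ∃ k, n = k + 1 := ⟨n - 1, by omega⟩
  rw [Nat.add_sub_cancel, ← Finset.Nat.sum_antidiagonal_snd, Cconst,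
    Finset.Nat.sum_antidiagonalTuple_succ]
  refine sum_congr rfl fun p hp => ?_
  rw [← HasAntidiagonal.mem_antidiagonal.mp hp]
  have hterm (y : Fin (k + 1) → ℕ) :
      log (((∏ i, ((Fin.cons p.1 y : Fin (k + 2) → ℕ) i)! : ℕ) : ℝ) / (p.1 + p.2)!) =
        log (((∏ i, (y i)! : ℕ) : ℝ) / p.2 !) - log ((p.1 + p.2).choose p.2) := by
    rw [Fin.prod_univ_succ]
    simp only [Fin.cons_zero, Fin.cons_succ, Nat.cast_mul]
    exact log_factorial_mul_div_factorial_add _ _ (by positivity)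
  simp only [hterm, sum_sub_distrib, sum_const, Finset.Nat.card_antidiagonalTuple_succ,
    nsmul_eq_mul, Cconst]
end

section
/- For all integers n ≥ 1 and D ≥ 0, one has Q(n,D) = Σ_{m=2}^{D} ( r(n, m−1) − r(n, D−m) )·log m. -/
open Finset

/-- `Q(n,D) = Σ_{m=0}^{D} r(n−1,m)·log C(D,m)`, where `r(n,D) = C(n+D,n)`. -/
noncomputable def Qconst (n D : ℕ) : ℝ :=
  ∑ m ∈ Finset.range (D + 1),
    (Nat.choose (n - 1 + m) (n - 1) : ℝ) * Real.log (Nat.choose D m)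

/-!
Writing `log C(D,m) = Σ_{m < j ≤ D} log j - Σ_{1 ≤ j ≤ D - m} log j` and exchanging the
order of summation, the coefficient of `log j` in `Q(n,D)` becomes a difference of two partial
sums of `m ↦ C(n-1+m, n-1)`, which the hockey-stick identity evaluates to `r(n, j-1) - r(n, D-j)`.
The term `j = 1` vanishes because `log 1 = 0`.
-/

lemma Real.log_factorial_eq_sum_Ico (t : ℕ) :
    Real.log t.factorial = ∑ j ∈ Ico 1 (t + 1), Real.log j := by
  rw [← prod_Ico_id_eq_factorial, Nat.cast_prod, Real.log_prod]
  intro j hj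
  exact Nat.cast_ne_zero.mpr (Nat.one_le_iff_ne_zero.mp (mem_Ico.mp hj).1)

lemma Real.log_choose_eq_sum_Ico_sub_sum_Ico {D m : ℕ} (h : m ≤ D) :
    Real.log (D.choose m) =
      ∑ j ∈ Ico (m + 1) (D + 1), Real.log j - ∑ j ∈ Ico 1 (D - m + 1), Real.log j := by
  have hfact : (D.choose m : ℝ) * m.factorial * (D - m).factorial = D.factorial := by
    exact_mod_cast Nat.choose_mul_factorial_mul_factorial h
  have hsplit := sum_Ico_consecutive (fun j : ℕ ↦ Real.log j)
    (Nat.le_add_left 1 m) (Nat.add_le_add_right h 1)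
  have hlog : Real.log (D.choose m) + Real.log m.factorial + Real.log (D - m).factorial =
      Real.log D.factorial := by
    have hchoose : (D.choose m : ℝ) ≠ 0 := by exact_mod_cast (Nat.choose_pos h).ne'
    rw [← hfact, Real.log_mul (by positivity) (by positivity),
      Real.log_mul hchoose (by positivity)]
  simp only [Real.log_factorial_eq_sum_Ico] at hlog
  linarith

theorem sum_mul_log_choose (w : ℕ → ℝ) (D : ℕ) :
    ∑ m ∈ range (D + 1), w m * Real.log (D.choose m) =
      ∑ j ∈ Ico 1 (D + 1),
        (∑ m ∈ range j, w m - ∑ m ∈ range (D + 1 - j), w m) * Real.log j := by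
  have hupper : ∑ m ∈ range (D + 1), ∑ j ∈ Ico (m + 1) (D + 1), w m * Real.log j =
      ∑ j ∈ Ico 1 (D + 1), ∑ m ∈ range j, w m * Real.log j :=
    sum_comm' fun m j ↦ by simp only [mem_range, mem_Ico]; omega
  have hlower : ∑ m ∈ range (D + 1), ∑ j ∈ Ico 1 (D - m + 1), w m * Real.log j =
      ∑ j ∈ Ico 1 (D + 1), ∑ m ∈ range (D + 1 - j), w m * Real.log j :=
    sum_comm' fun m j ↦ by simp only [mem_range, mem_Ico]; omega
  calc ∑ m ∈ range (D + 1), w m * Real.log (D.choose m)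
      = ∑ m ∈ range (D + 1), (∑ j ∈ Ico (m + 1) (D + 1), w m * Real.log j
          - ∑ j ∈ Ico 1 (D - m + 1), w m * Real.log j) := by
        refine sum_congr rfl fun m hm ↦ ?_
        rw [Real.log_choose_eq_sum_Ico_sub_sum_Ico (Nat.lt_succ_iff.mp (mem_range.mp hm)),
          mul_sub, mul_sum, mul_sum]
    _ = _ := by
        simp only [sum_sub_distrib, hupper, hlower, sub_mul, sum_mul]

theorem Nat.sum_range_choose_pred_add {n : ℕ} (hn : n ≠ 0) (k : ℕ) :
    ∑ m ∈ range k, (n - 1 + m).choose (n - 1) = (n - 1 + k).choose n := by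
  cases k with
  | zero => simp [Nat.choose_eq_zero_of_lt, Nat.sub_lt (Nat.pos_of_ne_zero hn)]
  | succ k =>
    have := Nat.sum_range_add_choose k (n - 1)
    rw [Nat.sub_add_cancel (Nat.one_le_iff_ne_zero.mpr hn)] at this
    rw [show n - 1 + (k + 1) = k + (n - 1) + 1 by omega, ← this]
    exact sum_congr rfl fun m _ ↦ by rw [add_comm]

theorem stmt_6 (n D : ℕ) (hn : 1 ≤ n) :
    Qconst n D = ∑ m ∈ Finset.Icc 2 D,
      ((Nat.choose (n + (m - 1)) n : ℝ) - (Nat.choose (n + (D - m)) n : ℝ)) *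
        Real.log m := by
  have hockey (k : ℕ) :
      ∑ m ∈ range k, ((n - 1 + m).choose (n - 1) : ℝ) = (n - 1 + k).choose n := by
    exact_mod_cast Nat.sum_range_choose_pred_add (Nat.one_le_iff_ne_zero.mp hn) k
  rw [Qconst, sum_mul_log_choose]
  symm
  refine (sum_subset (s₂ := Ico 1 (D + 1)) ?_ ?_).trans (sum_congr rfl fun j hj ↦ ?_)
  · intro j hj
    simp only [mem_Icc, mem_Ico] at hj ⊢
    omega
  · intro j hj hj'
    obtain rfl : j = 1 := by simp only [mem_Icc, mem_Ico] at hj hj'; omega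
    simp
  · obtain ⟨hj1, hjD⟩ := mem_Ico.mp hj
    rw [hockey, hockey, show n - 1 + j = n + (j - 1) by omega,
      show n - 1 + (D + 1 - j) = n + (D - j) by omega]
end

section
/- Let p ≤ q be positive integers and let f be a twice continuously differentiable real-valued function on the interval [p−1/2, q+1/2]. Then | Σ_{m=p}^{q} f(m) − ∫_{p−1/2}^{q+1/2} f(x) dx − (1/8)f'(p−1/2) + (1/8)f'(q+1/2) | ≤ (q−p+1) · sup_{p−1/2 ≤ x ≤ q+1/2} |f''(x)|. -/
/-!
Cut `[p - 1/2, q + 1/2]` into the unit cells `[m - 1/2, m + 1/2]`, `p ≤ m ≤ q`. Both the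
integral and the boundary terms `∓ f'/8` telescope over the cells, so the error is a sum of one
error per cell. On a cell, `f'` is `M`-Lipschitz with `M = sup |f''|`, so `f` stays within
`M/4` of its tangent line at the midpoint `m`; integrating gives `|∫ f - f m| ≤ M/4`, while
`|f'(m + 1/2) - f'(m - 1/2)| / 8 ≤ M/8`. Hence each cell contributes at most `M`.
-/

open Set

theorem Convex.abs_image_sub_le_of_abs_hasDerivWithin_le {f f' : ℝ → ℝ} {s : Set ℝ}
    {C x y : ℝ} (hs : Convex ℝ s) (hf : ∀ x ∈ s, HasDerivWithinAt f (f' x) s x)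
    (bound : ∀ x ∈ s, |f' x| ≤ C) (hx : x ∈ s) (hy : y ∈ s) :
    |f y - f x| ≤ C * |y - x| := by
  simpa only [Real.norm_eq_abs] using
    hs.norm_image_sub_le_of_norm_hasDerivWithin_le hf (by simpa only [Real.norm_eq_abs]) hx hy

theorem Convex.abs_sub_sub_deriv_mul_le {f f' : ℝ → ℝ} {s : Set ℝ} {c C x : ℝ}
    (hs : Convex ℝ s) (hf : ∀ x ∈ s, HasDerivWithinAt f (f' x) s x)
    (hC : ∀ y ∈ s, |f' y - f' c| ≤ C) (hc : c ∈ s) (hx : x ∈ s) :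
    |f x - f c - f' c * (x - c)| ≤ C * |x - c| := by
  have hg : ∀ y ∈ s, HasDerivWithinAt (fun y => f y - f' c * y) (f' y - f' c) s y :=
    fun y hy => by simpa using (hf y hy).fun_sub ((hasDerivWithinAt_id y s).const_mul (f' c))
  convert hs.abs_image_sub_le_of_abs_hasDerivWithin_le hg hC hc hx using 2
  ring

theorem abs_integral_sub_mul_midpoint_le {f f' f'' : ℝ → ℝ} {a b M : ℝ} (hab : a ≤ b)
    (hf : ∀ x ∈ Icc a b, HasDerivWithinAt f (f' x) (Icc a b) x)
    (hf' : ∀ x ∈ Icc a b, HasDerivWithinAt f' (f'' x) (Icc a b) x)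
    (hM : ∀ x ∈ Icc a b, |f'' x| ≤ M) :
    |(∫ x in a..b, f x) - (b - a) * f ((a + b) / 2)| ≤ M * (b - a) ^ 3 / 4 := by
  set m := (a + b) / 2 with hm_def
  have hm : m ∈ Icc a b := ⟨by linarith [hm_def], by linarith [hm_def]⟩
  have hM0 : 0 ≤ M := (abs_nonneg _).trans (hM a (left_mem_Icc.2 hab))
  have hdist : ∀ x ∈ Icc a b, |x - m| ≤ (b - a) / 2 := fun x hx =>
    abs_le.2 ⟨by linarith [hx.1, hm_def], by linarith [hx.2, hm_def]⟩
  have hf'_near : ∀ x ∈ Icc a b, |f' x - f' m| ≤ M * ((b - a) / 2) := fun x hx =>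
    ((convex_Icc a b).abs_image_sub_le_of_abs_hasDerivWithin_le hf' hM hm hx).trans
      (mul_le_mul_of_nonneg_left (hdist x hx) hM0)
  have htangent : ∀ x ∈ Icc a b,
      |f x - (f m + f' m * (x - m))| ≤ M * ((b - a) / 2) * ((b - a) / 2) := fun x hx => by
    rw [← sub_sub]
    exact ((convex_Icc a b).abs_sub_sub_deriv_mul_le hf hf'_near hm hx).trans
      (mul_le_mul_of_nonneg_left (hdist x hx) (by positivity))
  have hint : IntervalIntegrable f MeasureTheory.volume a b :=
    ContinuousOn.intervalIntegrable_of_Icc hab fun x hx => (hf x hx).continuousWithinAt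
  have htangent_int : ∫ x in a..b, (f m + f' m * (x - m)) = (b - a) * f m := by
    rw [intervalIntegral.integral_add intervalIntegrable_const
      (by apply Continuous.intervalIntegrable; fun_prop), intervalIntegral.integral_const_mul,
      intervalIntegral.integral_comp_sub_right fun x => x, integral_id,
      intervalIntegral.integral_const, smul_eq_mul, hm_def]
    ring
  calc |(∫ x in a..b, f x) - (b - a) * f m|
      = |∫ x in a..b, (f x - (f m + f' m * (x - m)))| := by
        rw [intervalIntegral.integral_sub hint
          (by apply Continuous.intervalIntegrable; fun_prop), htangent_int]
    _ ≤ M * ((b - a) / 2) * ((b - a) / 2) * |b - a| := by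
        rw [← Real.norm_eq_abs]
        refine intervalIntegral.norm_integral_le_of_norm_le_const fun x hx => ?_
        rw [Real.norm_eq_abs]
        refine htangent x ?_
        rw [uIoc_of_le hab] at hx
        exact Ioc_subset_Icc_self hx
    _ = M * (b - a) ^ 3 / 4 := by rw [abs_of_nonneg (sub_nonneg.2 hab)]; ring

noncomputable def midpointCellError (f f' : ℝ → ℝ) (m : ℝ) : ℝ :=
  f m - (∫ x in (m - 1 / 2)..(m + 1 / 2), f x) - 1 / 8 * f' (m - 1 / 2) + 1 / 8 * f' (m + 1 / 2)

theorem abs_midpointCellError_le {f f' f'' : ℝ → ℝ} {m M : ℝ}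
    (hf : ∀ x ∈ Icc (m - 1 / 2) (m + 1 / 2),
      HasDerivWithinAt f (f' x) (Icc (m - 1 / 2) (m + 1 / 2)) x)
    (hf' : ∀ x ∈ Icc (m - 1 / 2) (m + 1 / 2),
      HasDerivWithinAt f' (f'' x) (Icc (m - 1 / 2) (m + 1 / 2)) x)
    (hM : ∀ x ∈ Icc (m - 1 / 2) (m + 1 / 2), |f'' x| ≤ M) :
    |midpointCellError f f' m| ≤ M := by
  have hcell : m - 1 / 2 ≤ m + 1 / 2 := by linarith
  have hmidpoint := abs_integral_sub_mul_midpoint_le hcell hf hf' hM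
  have hslope := (convex_Icc _ _).abs_image_sub_le_of_abs_hasDerivWithin_le hf' hM
    (left_mem_Icc.2 hcell) (right_mem_Icc.2 hcell)
  have hM0 : 0 ≤ M := (abs_nonneg _).trans (hM _ (left_mem_Icc.2 hcell))
  rw [show m + 1 / 2 - (m - 1 / 2) = 1 by ring, show (m - 1 / 2 + (m + 1 / 2)) / 2 = m by ring]
    at hmidpoint
  rw [show m + 1 / 2 - (m - 1 / 2) = 1 by ring, abs_one] at hslope
  rw [abs_le] at hmidpoint hslope
  rw [midpointCellError, abs_le]
  constructor <;> linarith

theorem sum_Icc_sub_integral_eq_sum_midpointCellError {f g : ℝ → ℝ} {p q : ℕ}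
    (hpq : p ≤ q) (hf : ∀ m ∈ Finset.Icc p q,
      IntervalIntegrable f MeasureTheory.volume ((m : ℝ) - 1 / 2) ((m : ℝ) + 1 / 2)) :
    (∑ m ∈ Finset.Icc p q, f m) - (∫ x in ((p : ℝ) - 1 / 2)..((q : ℝ) + 1 / 2), f x)
        - 1 / 8 * g ((p : ℝ) - 1 / 2) + 1 / 8 * g ((q : ℝ) + 1 / 2)
      = ∑ m ∈ Finset.Icc p q, midpointCellError f g m := by
  have hshift : ∀ k : ℕ, ((k + 1 : ℕ) : ℝ) - 1 / 2 = (k : ℝ) + 1 / 2 := fun k => by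
    push_cast; ring
  have hintegral : ∑ m ∈ Finset.Icc p q, ∫ x in ((m : ℝ) - 1 / 2)..((m : ℝ) + 1 / 2), f x
      = ∫ x in ((p : ℝ) - 1 / 2)..((q : ℝ) + 1 / 2), f x := by
    have := intervalIntegral.sum_integral_adjacent_intervals_Ico (μ := MeasureTheory.volume)
      (a := fun k : ℕ => (k : ℝ) - 1 / 2) (by omega : p ≤ q + 1) fun k hk => by
        simpa only [hshift] using hf k (Finset.mem_Icc.2 ⟨hk.1, Nat.lt_succ_iff.1 hk.2⟩)
    simpa only [Finset.Ico_add_one_right_eq_Icc, hshift] using this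
  have hboundary := Finset.sum_Icc_sub hpq fun k : ℕ => 1 / 8 * g ((k : ℝ) - 1 / 2)
  simp only [hshift, Finset.sum_sub_distrib] at hboundary
  simp only [midpointCellError, Finset.sum_add_distrib, Finset.sum_sub_distrib]
  linarith

theorem stmt_7_general (p q : ℕ) (hpq : p ≤ q) (f f' f'' : ℝ → ℝ)
    (hf' : ∀ x ∈ Set.Icc ((p : ℝ) - 1 / 2) ((q : ℝ) + 1 / 2),
      HasDerivWithinAt f (f' x) (Set.Icc ((p : ℝ) - 1 / 2) ((q : ℝ) + 1 / 2)) x)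
    (hf'' : ∀ x ∈ Set.Icc ((p : ℝ) - 1 / 2) ((q : ℝ) + 1 / 2),
      HasDerivWithinAt f' (f'' x) (Set.Icc ((p : ℝ) - 1 / 2) ((q : ℝ) + 1 / 2)) x)
    (hcont : ContinuousOn f'' (Set.Icc ((p : ℝ) - 1 / 2) ((q : ℝ) + 1 / 2))) :
    |(∑ m ∈ Finset.Icc p q, f m) - (∫ x in ((p : ℝ) - 1 / 2)..((q : ℝ) + 1 / 2), f x)
        - (1 / 8) * f' ((p : ℝ) - 1 / 2) + (1 / 8) * f' ((q : ℝ) + 1 / 2)|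
      ≤ ((q : ℝ) - p + 1) *
        sSup ((fun x => |f'' x|) '' Set.Icc ((p : ℝ) - 1 / 2) ((q : ℝ) + 1 / 2)) := by
  set I := Icc ((p : ℝ) - 1 / 2) ((q : ℝ) + 1 / 2)
  set M := sSup ((fun x => |f'' x|) '' I)
  have hM : ∀ x ∈ I, |f'' x| ≤ M := fun x hx =>
    le_csSup (isCompact_Icc.bddAbove_image hcont.abs) (mem_image_of_mem _ hx)
  have hcell : ∀ m ∈ Finset.Icc p q, Icc ((m : ℝ) - 1 / 2) ((m : ℝ) + 1 / 2) ⊆ I := by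
    intro m hm
    have ⟨hpm, hmq⟩ : (p : ℝ) ≤ m ∧ (m : ℝ) ≤ q := by
      simpa only [Finset.mem_Icc, Nat.cast_le] using hm
    exact Icc_subset_Icc (by linarith) (by linarith)
  rw [sum_Icc_sub_integral_eq_sum_midpointCellError hpq fun m hm =>
    ContinuousOn.intervalIntegrable_of_Icc (by linarith)
      fun x hx => (hf' x (hcell m hm hx)).continuousWithinAt.mono (hcell m hm)]
  calc _ ≤ ∑ m ∈ Finset.Icc p q, |midpointCellError f f' m| := Finset.abs_sum_le_sum_abs _ _
    _ ≤ ∑ _m ∈ Finset.Icc p q, M := Finset.sum_le_sum fun m hm =>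
        abs_midpointCellError_le (fun x hx => (hf' x (hcell m hm hx)).mono (hcell m hm))
          (fun x hx => (hf'' x (hcell m hm hx)).mono (hcell m hm)) fun x hx => hM x (hcell m hm hx)
    _ = ((q : ℝ) - p + 1) * M := by
        rw [Finset.sum_const, Nat.card_Icc, nsmul_eq_mul, Nat.cast_sub (by omega)]
        push_cast
        ring

theorem stmt_7 (p q : ℕ) (hp : 1 ≤ p) (hpq : p ≤ q) (f f' f'' : ℝ → ℝ)
    (hf' : ∀ x ∈ Set.Icc ((p : ℝ) - 1 / 2) ((q : ℝ) + 1 / 2),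
      HasDerivWithinAt f (f' x) (Set.Icc ((p : ℝ) - 1 / 2) ((q : ℝ) + 1 / 2)) x)
    (hf'' : ∀ x ∈ Set.Icc ((p : ℝ) - 1 / 2) ((q : ℝ) + 1 / 2),
      HasDerivWithinAt f' (f'' x) (Set.Icc ((p : ℝ) - 1 / 2) ((q : ℝ) + 1 / 2)) x)
    (hcont : ContinuousOn f'' (Set.Icc ((p : ℝ) - 1 / 2) ((q : ℝ) + 1 / 2))) :
    |(∑ m ∈ Finset.Icc p q, f m) - (∫ x in ((p : ℝ) - 1 / 2)..((q : ℝ) + 1 / 2), f x)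
        - (1 / 8) * f' ((p : ℝ) - 1 / 2) + (1 / 8) * f' ((q : ℝ) + 1 / 2)|
      ≤ ((q : ℝ) - p + 1) *
        sSup ((fun x => |f'' x|) '' Set.Icc ((p : ℝ) - 1 / 2) ((q : ℝ) + 1 / 2)) :=
  stmt_7_general p q hpq f f' f'' hf' hf'' hcont
end

section
/- Let a be a real number and let f be a twice continuously differentiable real-valued function on the interval [a−1/2, a+1/2]. Then | ∫_{a−1/2}^{a+1/2} f(x) dx − f(a) + (1/8)f'(a−1/2) − (1/8)f'(a+1/2) | ≤ sup_{a−1/2 ≤ x ≤ a+1/2} |f''(x)|. -/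
open Set

theorem stmt_8 (a : ℝ) (f f' f'' : ℝ → ℝ)
    (hf' : ∀ x ∈ Set.Icc (a - 1 / 2) (a + 1 / 2),
      HasDerivWithinAt f (f' x) (Set.Icc (a - 1 / 2) (a + 1 / 2)) x)
    (hf'' : ∀ x ∈ Set.Icc (a - 1 / 2) (a + 1 / 2),
      HasDerivWithinAt f' (f'' x) (Set.Icc (a - 1 / 2) (a + 1 / 2)) x)
    (hcont : ContinuousOn f'' (Set.Icc (a - 1 / 2) (a + 1 / 2))) :
    |(∫ x in (a - 1 / 2)..(a + 1 / 2), f x) - f a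
        + (1 / 8) * f' (a - 1 / 2) - (1 / 8) * f' (a + 1 / 2)|
      ≤ sSup ((fun x => |f'' x|) '' Set.Icc (a - 1 / 2) (a + 1 / 2)) := by
  set I : Set ℝ := Set.Icc (a - 1 / 2) (a + 1 / 2) with hI
  set M : ℝ := sSup ((fun x => |f'' x|) '' I) with hM
  have hle : a - 1 / 2 ≤ a + 1 / 2 := by linarith
  have haI : a ∈ I := by constructor <;> simp <;> linarith
  have hlI : a - 1 / 2 ∈ I := ⟨le_refl _, hle⟩
  have hrI : a + 1 / 2 ∈ I := ⟨hle, le_refl _⟩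
  -- M bounds |f''| on I
  have hbdd : BddAbove ((fun x => |f'' x|) '' I) :=
    (isCompact_Icc.image_of_continuousOn (hcont.abs)).bddAbove
  have hMb : ∀ x ∈ I, |f'' x| ≤ M := fun x hx => le_csSup hbdd ⟨x, hx, rfl⟩
  have hM0 : 0 ≤ M := le_trans (abs_nonneg _) (hMb a haI)
  -- f' is M-Lipschitz on I
  have hlip : ∀ x ∈ I, ∀ y ∈ I, |f' x - f' y| ≤ M * |x - y| := by
    intro x hx y hy
    have := (convex_Icc _ _).norm_image_sub_le_of_norm_hasDerivWithin_le
      hf'' (fun z hz => by simpa [Real.norm_eq_abs] using hMb z hz) hy hx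
    simpa [Real.norm_eq_abs] using this
  -- correction term bound
  have hcorr : |f' (a - 1 / 2) - f' (a + 1 / 2)| ≤ M := by
    have := hlip _ hlI _ hrI
    have h1 : |(a - 1 / 2) - (a + 1 / 2)| = 1 := by rw [abs_of_nonpos] <;> ring_nf <;> norm_num
    rw [h1, mul_one] at this
    exact this
  -- Taylor-type bound: |f x - f a - f' a * (x - a)| ≤ M / 4 on I
  have htay : ∀ x ∈ I, |f x - f a - f' a * (x - a)| ≤ M / 4 := by
    intro x hx
    set g : ℝ → ℝ := fun y => f y - f' a * y with hg
    have hg' : ∀ y ∈ I, HasDerivWithinAt g (f' y - f' a) I y := by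
      intro y hy
      have h1 : HasDerivWithinAt (fun y => f' a * y) (f' a) I y := by
        simpa using (hasDerivWithinAt_id y I).const_mul (f' a)
      exact (hf' y hy).sub h1
    have hgb : ∀ y ∈ I, ‖f' y - f' a‖ ≤ M / 2 := by
      intro y hy
      have h1 := hlip y hy a haI
      have h2 : |y - a| ≤ 1 / 2 := by
        rw [abs_le]; obtain ⟨h3, h4⟩ := hy; constructor <;> simp at h3 h4 ⊢ <;> linarith
      have : M * |y - a| ≤ M * (1 / 2) := mul_le_mul_of_nonneg_left h2 hM0
      rw [Real.norm_eq_abs]; linarith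
    have := (convex_Icc _ _).norm_image_sub_le_of_norm_hasDerivWithin_le
      hg' hgb haI hx
    have h2 : |x - a| ≤ 1 / 2 := by
      rw [abs_le]; obtain ⟨h3, h4⟩ := hx; constructor <;> simp at h3 h4 ⊢ <;> linarith
    have h3 : M / 2 * |x - a| ≤ M / 2 * (1 / 2) := by
      apply mul_le_mul_of_nonneg_left h2; linarith
    have h4 : g x - g a = f x - f a - f' a * (x - a) := by simp [hg]; ring
    rw [Real.norm_eq_abs, Real.norm_eq_abs, h4] at this
    calc |f x - f a - f' a * (x - a)| ≤ M / 2 * |x - a| := this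
      _ ≤ M / 4 := by linarith
  -- integrability
  have hfc : ContinuousOn f I := fun x hx => (hf' x hx).continuousWithinAt
  have hint : IntervalIntegrable f MeasureTheory.volume (a - 1 / 2) (a + 1 / 2) := by
    apply ContinuousOn.intervalIntegrable
    rwa [Set.uIcc_of_le hle]
  have hint2 : IntervalIntegrable (fun x => f a + f' a * (x - a)) MeasureTheory.volume
      (a - 1 / 2) (a + 1 / 2) := by
    exact (by fun_prop : Continuous _).intervalIntegrable _ _
  -- the integral of the linear part
  have hlin : (∫ x in (a - 1 / 2)..(a + 1 / 2), (f a + f' a * (x - a))) = f a := by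
    rw [intervalIntegral.integral_add (by exact (by fun_prop : Continuous _).intervalIntegrable _ _)
      (by exact (by fun_prop : Continuous _).intervalIntegrable _ _)]
    rw [intervalIntegral.integral_const]
    have : (∫ x in (a - 1 / 2)..(a + 1 / 2), f' a * (x - a)) = 0 := by
      rw [intervalIntegral.integral_const_mul]
      have : (∫ x in (a - 1 / 2)..(a + 1 / 2), (x - a)) = 0 := by
        rw [intervalIntegral.integral_sub (by exact (by fun_prop : Continuous _).intervalIntegrable _ _)
          (by exact (by fun_prop : Continuous _).intervalIntegrable _ _)]
        rw [integral_id, intervalIntegral.integral_const]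
        simp
        ring
      rw [this, mul_zero]
    rw [this]
    simp
    ring
  -- bound on ∫ f - f a
  have hmain : |(∫ x in (a - 1 / 2)..(a + 1 / 2), f x) - f a| ≤ M / 4 := by
    have heq : (∫ x in (a - 1 / 2)..(a + 1 / 2), f x) - f a
        = ∫ x in (a - 1 / 2)..(a + 1 / 2), (f x - (f a + f' a * (x - a))) := by
      rw [intervalIntegral.integral_sub hint hint2, hlin]
    rw [heq]
    have := intervalIntegral.norm_integral_le_of_norm_le_const
      (f := fun x => f x - (f a + f' a * (x - a))) (C := M / 4)
      (a := a - 1 / 2) (b := a + 1 / 2) ?_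
    · have habs : |(a + 1 / 2) - (a - 1 / 2)| = 1 := by rw [abs_of_nonneg] <;> ring_nf <;> norm_num
      rw [habs, mul_one, Real.norm_eq_abs] at this
      exact this
    · intro x hx
      have hxI : x ∈ I := Set.Ioc_subset_Icc_self (by rwa [Set.uIoc_of_le hle] at hx)
      have := htay x hxI
      rw [Real.norm_eq_abs]
      calc |f x - (f a + f' a * (x - a))| = |f x - f a - f' a * (x - a)| := by ring_nf
        _ ≤ M / 4 := this
  -- conclude
  have key : (∫ x in (a - 1 / 2)..(a + 1 / 2), f x) - f a
      + (1 / 8) * f' (a - 1 / 2) - (1 / 8) * f' (a + 1 / 2)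
      = ((∫ x in (a - 1 / 2)..(a + 1 / 2), f x) - f a)
        + (1 / 8) * (f' (a - 1 / 2) - f' (a + 1 / 2)) := by ring
  rw [key]
  calc |((∫ x in (a - 1 / 2)..(a + 1 / 2), f x) - f a)
        + (1 / 8) * (f' (a - 1 / 2) - f' (a + 1 / 2))|
      ≤ |(∫ x in (a - 1 / 2)..(a + 1 / 2), f x) - f a|
        + |(1 / 8) * (f' (a - 1 / 2) - f' (a + 1 / 2))| := abs_add_le _ _
    _ ≤ M / 4 + (1 / 8) * M := by
        have : |(1 / 8 : ℝ) * (f' (a - 1 / 2) - f' (a + 1 / 2))|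
            = (1 / 8) * |f' (a - 1 / 2) - f' (a + 1 / 2)| := by
          rw [abs_mul]; norm_num
        rw [this]
        have := hcorr
        nlinarith [hmain]
    _ ≤ M := by linarith
end

section
/- For a positive integer N, set a_N = log(N!) − ∫_{1}^{N+1/2} log x dx. Then the sequence (a_N) converges to −1 + (1/2)·log(2π) as N → ∞, and for every N ≥ 1 one has | a_N − (−1 + (1/2)·log(2π)) | ≤ (3/2)·log(3/2) + 1/2 − (1/2)·log(2π). -/
/-!
Since `log` is concave, it lies below its tangent line at `n + 1`, so
`∫ x in n + 1/2..n + 3/2, log x ≤ log (n + 1)`: this is exactly `a (n + 1) - a n ≥ 0`, hence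
`a` is monotone. Rewriting `a N` through Mathlib's `Stirling.stirlingSeq` gives the limit
`L = -1 + log (2π) / 2`, so `|a N - L| = L - a N ≤ L - a 1`, and the stated bound exceeds
`L - a 1` by `2 - log (2π) ≥ 0`.
-/

open Filter Topology Real

namespace Real

theorem integral_log_le_two_mul_log {c h : ℝ} (hh : 0 ≤ h) (hhc : h < c) :
    ∫ x in c - h..c + h, log x ≤ 2 * h * log c := by
  have hc : 0 < c := hh.trans_lt hhc
  have tangent : ∀ x ∈ Set.Icc (c - h) (c + h), log x ≤ log c + (x - c) / c := by
    intro x hx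
    have hx0 : 0 < x := by linarith [hx.1]
    have := log_le_sub_one_of_pos (div_pos hx0 hc)
    rw [log_div hx0.ne' hc.ne'] at this
    rw [sub_div, div_self hc.ne']
    linarith
  calc ∫ x in c - h..c + h, log x
      ≤ ∫ x in c - h..c + h, (log c + (x - c) / c) :=
        intervalIntegral.integral_mono_on (by linarith) intervalIntegral.intervalIntegrable_log'
          (Continuous.intervalIntegrable (by fun_prop) _ _) tangent
    _ = 2 * h * log c := by
        rw [intervalIntegral.integral_add (Continuous.intervalIntegrable (by fun_prop) _ _)
            (Continuous.intervalIntegrable (by fun_prop) _ _),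
          intervalIntegral.integral_div,
          intervalIntegral.integral_comp_sub_right (· : ℝ → ℝ)]
        simp only [intervalIntegral.integral_const, integral_id, smul_eq_mul]
        ring

theorem tendsto_add_mul_log_one_add_div_atTop (s t : ℝ) :
    Tendsto (fun x => (x + s) * log (1 + t / x)) atTop (𝓝 t) := by
  have hlog : Tendsto (fun x => log (1 + t / x)) atTop (𝓝 0) := by
    have := ((tendsto_const_nhds (x := t)).div_atTop tendsto_id).const_add 1
    simpa using this.log (by norm_num)
  simpa [add_mul] using (tendsto_mul_log_one_add_div_atTop t).add (hlog.const_mul s)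

theorem log_two_mul_pi_le_two : log (2 * π) ≤ 2 := by
  rw [log_le_iff_le_exp (by positivity), show (2 : ℝ) = 1 + 1 by norm_num, exp_add]
  nlinarith [exp_one_gt_d9, pi_lt_d2]

end Real

open scoped Nat

noncomputable def logFactorialSubIntegralLog (N : ℕ) : ℝ :=
  log N ! - ∫ x in (1 : ℝ)..N + 1 / 2, log x

theorem logFactorialSubIntegralLog_eq_log_stirlingSeq {N : ℕ} (hN : N ≠ 0) :
    logFactorialSubIntegralLog N = log (Stirling.stirlingSeq N) + log 2 / 2 - 1 / 2
      - (N + 1 / 2) * log (1 + (1 / 2) / N) := by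
  have hN : (0 : ℝ) < N := by positivity
  rw [logFactorialSubIntegralLog, integral_log, Stirling.log_stirlingSeq_formula,
    log_mul two_ne_zero hN.ne', log_div hN.ne' (exp_ne_zero 1), log_exp,
    show 1 + (1 / 2) / (N : ℝ) = (N + 1 / 2) / N by field_simp,
    log_div (by positivity) hN.ne', log_one]
  ring

theorem monotone_logFactorialSubIntegralLog : Monotone logFactorialSubIntegralLog := by
  refine monotone_nat_of_le_succ fun n => ?_
  have hn : (0 : ℝ) ≤ n := n.cast_nonneg
  have split := intervalIntegral.integral_interval_sub_left (a := 1) (b := (n : ℝ) + 1 + 1 / 2)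
    (c := (n : ℝ) + 1 / 2) intervalIntegral.intervalIntegrable_log'
    intervalIntegral.intervalIntegrable_log'
  have midpoint :=
    integral_log_le_two_mul_log (c := n + 1) (h := 1 / 2) (by norm_num) (by linarith)
  rw [show (n : ℝ) + 1 - 1 / 2 = n + 1 / 2 by ring] at midpoint
  rw [logFactorialSubIntegralLog, logFactorialSubIntegralLog, Nat.factorial_succ, Nat.cast_mul,
    log_mul (by positivity) (by positivity)]
  push_cast
  linarith

theorem tendsto_logFactorialSubIntegralLog :
    Tendsto logFactorialSubIntegralLog atTop (𝓝 (-1 + 1 / 2 * log (2 * π))) := by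
  have hlim : Tendsto (fun N : ℕ => log (Stirling.stirlingSeq N) + log 2 / 2 - 1 / 2
      - (N + 1 / 2) * log (1 + (1 / 2) / N)) atTop (𝓝 (log √π + log 2 / 2 - 1 / 2 - 1 / 2)) :=
    (((Stirling.tendsto_stirlingSeq_sqrt_pi.log (by positivity)).add_const _).sub_const _).sub
      ((tendsto_add_mul_log_one_add_div_atTop _ _).comp tendsto_natCast_atTop_atTop)
  rw [log_sqrt pi_pos.le] at hlim
  rw [log_mul two_ne_zero pi_ne_zero]
  convert hlim.congr' ((eventually_ne_atTop 0).mono fun N hN =>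
    (logFactorialSubIntegralLog_eq_log_stirlingSeq hN).symm) using 2
  ring

theorem logFactorialSubIntegralLog_one :
    logFactorialSubIntegralLog 1 = 1 / 2 - 3 / 2 * log (3 / 2) := by
  rw [logFactorialSubIntegralLog, integral_log]
  norm_num
  ring

theorem stmt_9 (a : ℕ → ℝ)
    (ha : ∀ N : ℕ, a N = Real.log (Nat.factorial N)
      - ∫ x in (1 : ℝ)..((N : ℝ) + 1 / 2), Real.log x) :
    Filter.Tendsto a Filter.atTop (nhds (-1 + (1 / 2) * Real.log (2 * Real.pi))) ∧
    ∀ N : ℕ, 1 ≤ N →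
      |a N - (-1 + (1 / 2) * Real.log (2 * Real.pi))|
        ≤ (3 / 2) * Real.log (3 / 2) + 1 / 2 - (1 / 2) * Real.log (2 * Real.pi) := by
  obtain rfl : a = logFactorialSubIntegralLog := funext ha
  refine ⟨tendsto_logFactorialSubIntegralLog, fun N hN => ?_⟩
  have lower := monotone_logFactorialSubIntegralLog hN
  have upper := monotone_logFactorialSubIntegralLog.ge_of_tendsto
    tendsto_logFactorialSubIntegralLog N
  rw [logFactorialSubIntegralLog_one] at lower
  rw [abs_sub_comm, abs_of_nonneg (sub_nonneg.2 upper)]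
  linarith [log_two_mul_pi_le_two]
end

section
/- For every fixed integer n ≥ 1, the quantity S(n,D)/D^{n+1} converges to H_n/(n+1) as the integer D tends to infinity, where H_n = 1 + 1/2 + ⋯ + 1/n. -/
open Finset Filter

/-- `S(n,D) = Σ_{m=2}^{D} ((m−1)^n − (D−m)^n)·log m`. -/
noncomputable def S (n D : ℕ) : ℝ :=
  ∑ m ∈ Finset.Icc 2 D, (((m : ℝ) - 1) ^ n - ((D : ℝ) - (m : ℝ)) ^ n) * Real.log m

/-- The `n`-th harmonic number `H_n = 1 + 1/2 + ⋯ + 1/n`. -/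
noncomputable def H (n : ℕ) : ℝ := ∑ k ∈ Finset.Icc 1 n, (1 : ℝ) / (k : ℝ)

/-!
Expanding `(m - 1)^n` and `(D - m)^n` binomially writes both halves of `S(n,D)` through the sums
`L_i(D) = Σ_{m=2}^{D} m^i log m`, and comparing `L_i(D)` with `∫₁^D x^i log x` gives
`L_i(D) / D^(i+1) = log D / (i+1) - 1/(i+1)^2 + o(1)`. Hence both halves of `S(n,D) / D^(n+1)`
are `log D / (n+1)` plus a convergent term: `-1/(n+1)^2` for the first, and
`-H_{n+1}/(n+1)` for the second, by the identities `Σ_k (-1)^k C(n,k)/(k+1) = 1/(n+1)` and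
`Σ_k (-1)^k C(n,k)/(k+1)^2 = H_{n+1}/(n+1)`. The difference is `H_n/(n+1)`.
-/

open Real Topology

lemma H_succ (n : ℕ) : H (n + 1) = H n + 1 / (n + 1) := by
  rw [H, H, sum_Icc_succ_top (by omega), Nat.cast_succ]

lemma cast_choose_div_succ (n k : ℕ) :
    (n.choose k : ℝ) / (k + 1) = (n + 1).choose (k + 1) / (n + 1) := by
  rw [div_eq_div_iff (by positivity) (by positivity)]
  exact_mod_cast (Nat.add_one_mul_choose_eq n k).symm.trans (mul_comm _ _) |>.symm

lemma alternating_sum_choose_div_succ (n : ℕ) :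
    ∑ k ∈ range (n + 1), (-1 : ℝ) ^ k * n.choose k / (k + 1) = 1 / (n + 1) := by
  have hsum : ∑ k ∈ range (n + 1), (-1 : ℝ) ^ k * (n + 1).choose (k + 1) = 1 := by
    have h := Int.alternating_sum_range_choose_of_ne (Nat.succ_ne_zero n)
    rw [sum_range_succ'] at h
    simp only [pow_succ, pow_zero, mul_neg_one, neg_mul, sum_neg_distrib, Nat.choose_zero_right,
      Nat.succ_eq_add_one, Nat.cast_one, one_mul] at h
    exact_mod_cast neg_add_eq_zero.mp h
  simp_rw [mul_div_assoc, cast_choose_div_succ, ← mul_div_assoc, ← sum_div, hsum]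

lemma alternating_sum_choose_succ_div_succ (n : ℕ) :
    ∑ k ∈ range n, (-1 : ℝ) ^ k * n.choose (k + 1) / (k + 1) = H n := by
  induction n with
  | zero => simp [H]
  | succ n ih =>
    have hlast : ∑ k ∈ range (n + 1), (-1 : ℝ) ^ k * n.choose (k + 1) / (k + 1) = H n := by
      rw [sum_range_succ, Nat.choose_succ_self, ih]
      simp
    simp only [Nat.choose_succ_succ', Nat.cast_add, mul_add, add_div, sum_add_distrib,
      alternating_sum_choose_div_succ, hlast, H_succ]
    ring

lemma alternating_sum_choose_div_succ_sq (n : ℕ) :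
    ∑ k ∈ range (n + 1), (-1 : ℝ) ^ k * n.choose k / (k + 1) ^ 2 = H (n + 1) / (n + 1) := by
  rw [← alternating_sum_choose_succ_div_succ, sum_div]
  refine sum_congr rfl fun k _ => ?_
  rw [sq, ← div_div, mul_div_assoc, cast_choose_div_succ]
  ring

section SumIntegral

variable {f : ℝ → ℝ} {a b : ℕ}

lemma MonotoneOn.integral_le_sum_Ioc (hab : a ≤ b) (hf : MonotoneOn f (Set.Icc a b)) :
    ∫ x in a..b, f x ≤ ∑ k ∈ Ioc a b, f k := by
  have h := hf.integral_le_sum_Ico hab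
  rwa [sum_Ico_add' (fun k : ℕ => f k) a b 1, Ico_add_one_add_one_eq_Ioc] at h

lemma MonotoneOn.sum_Ioc_le_integral_add (hab : a ≤ b) (hf : MonotoneOn f (Set.Icc a b)) :
    ∑ k ∈ Ioc a b, f k ≤ (∫ x in a..b, f x) + (f b - f a) := by
  have h : ∑ k ∈ Ico a b, f k ≤ ∫ x in a..b, f x := hf.sum_le_integral_Ico hab
  have hIcc : ∑ k ∈ Ico a b, f k + f b = ∑ k ∈ Ioc a b, f k + f a :=
    (sum_Ico_add_eq_sum_Icc hab).trans (sum_Ioc_add_eq_sum_Icc hab).symm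
  linarith

end SumIntegral

lemma monotoneOn_pow_mul_log (i : ℕ) : MonotoneOn (fun x : ℝ => x ^ i * log x) (Set.Ici 1) := by
  intro x hx y hy hxy
  have hx : (1 : ℝ) ≤ x := hx
  exact mul_le_mul (pow_le_pow_left₀ (by linarith) hxy i) (log_le_log (by linarith) hxy)
    (log_nonneg hx) (pow_nonneg (by linarith) i)

lemma integral_pow_mul_log (i : ℕ) {a b : ℝ} (ha : 0 < a) (hb : 0 < b) :
    ∫ x in a..b, x ^ i * log x =
      (b ^ (i + 1) * log b - a ^ (i + 1) * log a) / (i + 1)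
        - (b ^ (i + 1) - a ^ (i + 1)) / (i + 1) ^ 2 := by
  have hpos : ∀ x ∈ Set.uIcc a b, 0 < x := by
    intro x hx
    rcases Set.mem_uIcc.mp hx with h | h <;> linarith [h.1]
  have hi : (i : ℝ) + 1 ≠ 0 := by positivity
  have hderiv : ∀ x ∈ Set.uIcc a b, HasDerivAt
      (fun x : ℝ => x ^ (i + 1) * log x / (i + 1) - x ^ (i + 1) / (i + 1) ^ 2) (x ^ i * log x) x := by
    intro x hx
    have hx := (hpos x hx).ne'
    have hpow : HasDerivAt (fun x : ℝ => x ^ (i + 1)) ((i + 1) * x ^ i) x := by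
      simpa using hasDerivAt_pow (i + 1) x
    refine (((hpow.mul (hasDerivAt_log hx)).div_const _).sub (hpow.div_const _)).congr_deriv ?_
    field_simp
    ring
  have hcont : ContinuousOn (fun x : ℝ => x ^ i * log x) (Set.uIcc a b) :=
    (continuousOn_pow i).mul (continuousOn_log.mono fun x hx => (hpos x hx).ne')
  rw [intervalIntegral.integral_eq_sub_of_hasDerivAt hderiv hcont.intervalIntegrable]
  ring

noncomputable def sumPowMulLog (i D : ℕ) : ℝ := ∑ m ∈ Icc 2 D, (m : ℝ) ^ i * log m

lemma sumPowMulLog_bounds (i : ℕ) {D : ℕ} (hD : 1 ≤ D) :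
    (D : ℝ) ^ (i + 1) * log D / (i + 1) - ((D : ℝ) ^ (i + 1) - 1) / (i + 1) ^ 2 ≤ sumPowMulLog i D ∧
      sumPowMulLog i D ≤
        (D : ℝ) ^ (i + 1) * log D / (i + 1) - ((D : ℝ) ^ (i + 1) - 1) / (i + 1) ^ 2
          + (D : ℝ) ^ i * log D := by
  have hmono : MonotoneOn (fun x : ℝ => x ^ i * log x) (Set.Icc (1 : ℕ) D) :=
    (monotoneOn_pow_mul_log i).mono fun x hx => by simpa using hx.1
  have hint : ∫ x in (1 : ℝ)..D, x ^ i * log x =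
      (D : ℝ) ^ (i + 1) * log D / (i + 1) - ((D : ℝ) ^ (i + 1) - 1) / (i + 1) ^ 2 := by
    rw [integral_pow_mul_log i one_pos (by exact_mod_cast hD)]
    simp
  have hsum : sumPowMulLog i D = ∑ k ∈ Ioc 1 D, (k : ℝ) ^ i * log k := by
    rw [sumPowMulLog, ← Icc_add_one_left_eq_Ioc]
    rfl
  have hlow := hmono.integral_le_sum_Ioc hD
  have hup := hmono.sum_Ioc_le_integral_add hD
  simp only [Nat.cast_one, one_pow, log_one, mul_zero, sub_zero, hint] at hlow hup
  rw [hsum]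
  exact ⟨hlow, hup⟩

lemma sumPowMulLog_le (i D : ℕ) : sumPowMulLog i D ≤ (D : ℝ) ^ (i + 1) * log D := by
  have hterm : ∀ m ∈ Icc 2 D, (m : ℝ) ^ i * log m ≤ (D : ℝ) ^ i * log D := fun m hm => by
    have hm := mem_Icc.mp hm
    exact monotoneOn_pow_mul_log i (show (1 : ℝ) ≤ m by exact_mod_cast (by omega : 1 ≤ m))
      (show (1 : ℝ) ≤ D by exact_mod_cast (by omega : 1 ≤ D)) (by exact_mod_cast hm.2)
  have hcard : ((Icc 2 D).card : ℝ) ≤ D := by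
    rw [Nat.card_Icc]
    exact_mod_cast (by omega : D + 1 - 2 ≤ D)
  calc sumPowMulLog i D ≤ (Icc 2 D).card • ((D : ℝ) ^ i * log D) := sum_le_card_nsmul _ _ _ hterm
    _ ≤ (D : ℝ) * ((D : ℝ) ^ i * log D) := by
      rw [nsmul_eq_mul]
      gcongr
    _ = (D : ℝ) ^ (i + 1) * log D := by ring

lemma sumPowMulLog_nonneg (i D : ℕ) : 0 ≤ sumPowMulLog i D :=
  sum_nonneg fun m hm => by
    have hm : (1 : ℝ) ≤ m := Nat.one_le_cast.mpr (by have := mem_Icc.mp hm; omega)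
    exact mul_nonneg (by positivity) (log_nonneg hm)

lemma tendsto_log_natCast_div_natCast : Tendsto (fun D : ℕ => log D / D) atTop (𝓝 0) :=
  isLittleO_log_id_atTop.tendsto_div_nhds_zero.comp tendsto_natCast_atTop_atTop

lemma tendsto_inv_natCast_pow {k : ℕ} (hk : k ≠ 0) :
    Tendsto (fun D : ℕ => ((D : ℝ) ^ k)⁻¹) atTop (𝓝 0) :=
  ((tendsto_pow_atTop hk).comp tendsto_natCast_atTop_atTop).inv_tendsto_atTop

lemma tendsto_sumPowMulLog_div_sub_log (i : ℕ) :
    Tendsto (fun D : ℕ => sumPowMulLog i D / D ^ (i + 1) - log D / (i + 1)) atTop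
      (𝓝 (-1 / ((i : ℝ) + 1) ^ 2)) := by
  have hlow : Tendsto (fun D : ℕ => -1 / ((i : ℝ) + 1) ^ 2 + ((D : ℝ) ^ (i + 1))⁻¹ / (i + 1) ^ 2)
      atTop (𝓝 (-1 / ((i : ℝ) + 1) ^ 2)) := by
    simpa using ((tendsto_inv_natCast_pow i.succ_ne_zero).div_const (((i : ℝ) + 1) ^ 2)).const_add
      (-1 / ((i : ℝ) + 1) ^ 2)
  have hup := hlow.add tendsto_log_natCast_div_natCast
  rw [add_zero] at hup
  refine tendsto_of_tendsto_of_tendsto_of_le_of_le' hlow hup ?_ ?_ <;>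
    filter_upwards [eventually_ge_atTop 1] with D hD <;>
    obtain ⟨hlo, hhi⟩ := sumPowMulLog_bounds i hD <;>
    have hD0 : (D : ℝ) ≠ 0 := by positivity
  · calc _ = ((D : ℝ) ^ (i + 1) * log D / (i + 1) - ((D : ℝ) ^ (i + 1) - 1) / (i + 1) ^ 2)
            / D ^ (i + 1) - log D / (i + 1) := by
          field_simp
          ring
      _ ≤ _ := by gcongr
  · calc _ ≤ ((D : ℝ) ^ (i + 1) * log D / (i + 1) - ((D : ℝ) ^ (i + 1) - 1) / (i + 1) ^ 2
            + D ^ i * log D) / D ^ (i + 1) - log D / (i + 1) := by gcongr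
      _ = _ := by
          field_simp
          ring

lemma tendsto_sumPowMulLog_div_pow_of_lt {i k : ℕ} (hik : i < k) :
    Tendsto (fun D : ℕ => sumPowMulLog i D / D ^ (k + 1)) atTop (𝓝 0) := by
  refine tendsto_of_tendsto_of_tendsto_of_le_of_le' tendsto_const_nhds
    tendsto_log_natCast_div_natCast ?_ ?_ <;>
    filter_upwards [eventually_ge_atTop 1] with D hD
  · exact div_nonneg (sumPowMulLog_nonneg i D) (by positivity)
  · have hD1 : (1 : ℝ) ≤ D := by exact_mod_cast hD
    have hpow : (D : ℝ) ^ (i + 1) * D ≤ (D : ℝ) ^ (k + 1) := by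
      rw [← pow_succ]
      exact pow_le_pow_right₀ hD1 (by omega)
    calc sumPowMulLog i D / D ^ (k + 1) ≤ (D : ℝ) ^ (i + 1) * log D / D ^ (k + 1) := by
          gcongr
          exact sumPowMulLog_le i D
      _ ≤ (D : ℝ) ^ (i + 1) * log D / ((D : ℝ) ^ (i + 1) * D) := by
          gcongr
      _ = log D / D := by
          field_simp

lemma sum_mul_add_pow_mul_log (a c : ℝ) (n D : ℕ) :
    ∑ m ∈ Icc 2 D, (a * m + c) ^ n * log m =
      ∑ i ∈ range (n + 1), n.choose i * a ^ i * c ^ (n - i) * sumPowMulLog i D := by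
  simp_rw [add_pow, sum_mul, sumPowMulLog, mul_sum]
  rw [sum_comm]
  refine sum_congr rfl fun m _ => sum_congr rfl fun i _ => ?_
  ring

lemma tendsto_sum_sub_one_pow_mul_log (n : ℕ) :
    Tendsto (fun D : ℕ =>
        (∑ m ∈ Icc 2 D, ((m : ℝ) - 1) ^ n * log m) / D ^ (n + 1) - log D / (n + 1))
      atTop (𝓝 (-1 / ((n : ℝ) + 1) ^ 2)) := by
  have hexpand : ∀ D : ℕ,
      (∑ m ∈ Icc 2 D, ((m : ℝ) - 1) ^ n * log m) / D ^ (n + 1) - log D / (n + 1) =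
        ∑ i ∈ range n, n.choose i * (-1 : ℝ) ^ (n - i) * (sumPowMulLog i D / D ^ (n + 1))
          + (sumPowMulLog n D / D ^ (n + 1) - log D / (n + 1)) := by
    intro D
    have hlin : ∀ m : ℕ, (m : ℝ) - 1 = 1 * m + (-1) := fun m => by ring
    simp_rw [hlin, sum_mul_add_pow_mul_log, sum_range_succ, add_div, sum_div, one_pow, mul_one,
      Nat.choose_self, Nat.sub_self, pow_zero, Nat.cast_one, one_mul, mul_div_assoc]
    ring
  simp_rw [hexpand]
  simpa using (tendsto_finsetSum _ fun i hi =>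
    (tendsto_sumPowMulLog_div_pow_of_lt (mem_range.mp hi)).const_mul
      (n.choose i * (-1 : ℝ) ^ (n - i))).add (tendsto_sumPowMulLog_div_sub_log n)

lemma tendsto_sum_sub_pow_mul_log (n : ℕ) :
    Tendsto (fun D : ℕ =>
        (∑ m ∈ Icc 2 D, ((D : ℝ) - m) ^ n * log m) / D ^ (n + 1) - log D / (n + 1))
      atTop (𝓝 (-(H (n + 1) / (n + 1)))) := by
  have hexpand : ∀ D : ℕ, D ≠ 0 →
      (∑ m ∈ Icc 2 D, ((D : ℝ) - m) ^ n * log m) / D ^ (n + 1) - log D / (n + 1) =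
        ∑ i ∈ range (n + 1), (-1 : ℝ) ^ i * n.choose i *
          (sumPowMulLog i D / D ^ (i + 1) - log D / (i + 1)) := by
    intro D hD
    have hlin : ∀ m : ℕ, (D : ℝ) - m = -1 * m + D := fun m => by ring
    have hlog : ∑ i ∈ range (n + 1), (-1 : ℝ) ^ i * n.choose i * (log D / (i + 1)) =
        log D / (n + 1) := by
      rw [← mul_one_div (log D), ← alternating_sum_choose_div_succ, mul_sum]
      exact sum_congr rfl fun i _ => by ring
    simp_rw [hlin, sum_mul_add_pow_mul_log, mul_sub, sum_sub_distrib, hlog, sum_div]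
    congr 1
    refine sum_congr rfl fun i hi => ?_
    have hpow : (D : ℝ) ^ (n + 1) = D ^ (n - i) * D ^ (i + 1) := by
      rw [← pow_add]
      have := mem_range.mp hi
      congr 1
      omega
    field_simp
    rw [hpow]
    ring
  have hlim := tendsto_finsetSum (range (n + 1)) fun i _ =>
    (tendsto_sumPowMulLog_div_sub_log i).const_mul ((-1 : ℝ) ^ i * n.choose i)
  have hvalue : ∑ i ∈ range (n + 1), (-1 : ℝ) ^ i * n.choose i * (-1 / ((i : ℝ) + 1) ^ 2) =
      -(H (n + 1) / (n + 1)) := by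
    rw [← alternating_sum_choose_div_succ_sq, ← sum_neg_distrib]
    exact sum_congr rfl fun i _ => by ring
  rw [hvalue] at hlim
  refine hlim.congr' ?_
  filter_upwards [eventually_ne_atTop 0] with D hD using (hexpand D hD).symm

theorem stmt_14_general (n : ℕ) :
    Filter.Tendsto (fun D : ℕ => S n D / (D : ℝ) ^ (n + 1)) Filter.atTop
      (nhds (H n / ((n : ℝ) + 1))) := by
  have hsplit : ∀ D : ℕ, S n D / (D : ℝ) ^ (n + 1) =
      ((∑ m ∈ Icc 2 D, ((m : ℝ) - 1) ^ n * log m) / D ^ (n + 1) - log D / (n + 1))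
        - ((∑ m ∈ Icc 2 D, ((D : ℝ) - m) ^ n * log m) / D ^ (n + 1) - log D / (n + 1)) := by
    intro D
    simp_rw [S, sub_mul, sum_sub_distrib]
    ring
  have hvalue : -1 / ((n : ℝ) + 1) ^ 2 - -(H (n + 1) / (n + 1)) = H n / (n + 1) := by
    rw [H_succ]
    field_simp
    ring
  simp_rw [hsplit, ← hvalue]
  exact (tendsto_sum_sub_one_pow_mul_log n).sub (tendsto_sum_sub_pow_mul_log n)

theorem stmt_14 (n : ℕ) (hn : 1 ≤ n) :
    Filter.Tendsto (fun D : ℕ => S n D / (D : ℝ) ^ (n + 1)) Filter.atTop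
      (nhds (H n / ((n : ℝ) + 1))) :=
  stmt_14_general n
end

section
/- The quantity ( C(1,D) + D²/2 − (1/2)·D·log D ) / D converges to −1 + (1/2)·log(2π) as the integer D tends to infinity, where C(1,D) = Σ_{i+j=D} log( i!·j!/D! ) = −Σ_{m=0}^{D} log C(D,m). -/
open Finset Filter

/-!
Since `C(1,D) = 2 Σ_{m ≤ D} log m! - (D + 1) log D!`, summing the Stirling remainder
`r(m) = log m! - m log m + m - (1/2) log m` over `m ≤ D` gives
`C(1,D) + D²/2 - (1/2) D log D = Σ_{m ≤ D} r(m) + (log D! - D log D)/2 - D/2`.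
Stirling's formula says `r(m) → (1/2) log(2π)`, so after division by `D` the first term tends to
`(1/2) log(2π)` by Cesàro, while `log D! / D - log D → -1` makes the second tend to `-1/2`.
-/

open Real Topology
open scoped Nat

theorem Filter.Tendsto.sum_range_succ_div {u : ℕ → ℝ} {l : ℝ} (h : Tendsto u atTop (𝓝 l)) :
    Tendsto (fun n : ℕ => (∑ i ∈ range (n + 1), u i) / n) atTop (𝓝 l) := by
  have hlast : Tendsto (fun n : ℕ => u n * (n : ℝ)⁻¹) atTop (𝓝 0) := by
    simpa using h.mul tendsto_inv_atTop_nhds_zero_nat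
  rw [← add_zero l]
  refine (h.cesaro.add hlast).congr fun n => ?_
  rw [sum_range_succ]
  ring

theorem log_factorial_succ (n : ℕ) : log (n + 1)! = log n ! + log (n + 1) := by
  rw [Nat.factorial_succ, Nat.cast_mul, log_mul (by positivity) (by positivity), add_comm]
  push_cast
  rfl

namespace Stirling

noncomputable def logFactorialRemainder (n : ℕ) : ℝ :=
  log n ! - n * log n + n - log n / 2

theorem logFactorialRemainder_eq_log_stirlingSeq {n : ℕ} (hn : n ≠ 0) :
    logFactorialRemainder n = log (stirlingSeq n) + log 2 / 2 := by
  have hn' : (n : ℝ) ≠ 0 := Nat.cast_ne_zero.mpr hn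
  rw [log_stirlingSeq_formula, log_mul two_ne_zero hn', log_div hn' (exp_ne_zero 1), log_exp,
    logFactorialRemainder]
  ring

theorem tendsto_logFactorialRemainder :
    Tendsto logFactorialRemainder atTop (𝓝 (log (2 * π) / 2)) := by
  have hlimit : log √π + log 2 / 2 = log (2 * π) / 2 := by
    rw [log_sqrt pi_pos.le, log_mul two_ne_zero pi_pos.ne']
    ring
  rw [← hlimit]
  refine (((continuousAt_log (sqrt_pos.mpr pi_pos).ne').tendsto.comp
    tendsto_stirlingSeq_sqrt_pi).add_const _).congr' ?_
  filter_upwards [eventually_ne_atTop 0] with n hn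
  exact (logFactorialRemainder_eq_log_stirlingSeq hn).symm

theorem tendsto_log_factorial_div_sub_log :
    Tendsto (fun n : ℕ => log n ! / n - log n) atTop (𝓝 (-1)) := by
  have hlog : Tendsto (fun n : ℕ => log n / n) atTop (𝓝 0) :=
    isLittleO_log_id_atTop.tendsto_div_nhds_zero.comp tendsto_natCast_atTop_atTop
  have hrem : Tendsto (fun n : ℕ => logFactorialRemainder n / n) atTop (𝓝 0) := by
    simpa [div_eq_mul_inv] using
      tendsto_logFactorialRemainder.mul tendsto_inv_atTop_nhds_zero_nat
  have hlim := (hrem.add (hlog.div_const 2)).sub_const 1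
  rw [zero_add, zero_div, zero_sub] at hlim
  refine hlim.congr' ?_
  filter_upwards [eventually_ne_atTop 0] with n hn
  have hn' : (n : ℝ) ≠ 0 := Nat.cast_ne_zero.mpr hn
  field_simp
  rw [logFactorialRemainder]
  ring

theorem sum_range_succ_logFactorialRemainder (D : ℕ) :
    ∑ m ∈ range (D + 1), logFactorialRemainder m =
      2 * ∑ m ∈ range (D + 1), log m ! - (D + 1) * log D ! + D * (D + 1) / 2 - log D ! / 2 := by
  induction D with
  | zero => simp [logFactorialRemainder]
  | succ n ih =>
    rw [sum_range_succ, ih, sum_range_succ _ (n + 1), log_factorial_succ,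
      logFactorialRemainder, log_factorial_succ]
    push_cast
    ring

end Stirling

theorem Cconst_one_eq (D : ℕ) :
    Cconst 1 D = 2 * ∑ m ∈ range (D + 1), log m ! - (D + 1) * log D ! := by
  have hterm : ∀ p ∈ antidiagonal D,
      log (((p.1 ! * p.2 ! : ℕ) : ℝ) / D !) = log p.1 ! + log p.2 ! - log D ! := by
    intro p _
    rw [Nat.cast_mul, log_div (by positivity) (by positivity),
      log_mul (by positivity) (by positivity)]
  have hswap : ∑ p ∈ antidiagonal D, log (p.2 ! : ℝ) = ∑ p ∈ antidiagonal D, log (p.1 ! : ℝ) :=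
    Nat.sum_antidiagonal_swap (f := fun p => log (p.1 ! : ℝ))
  rw [Cconst, Nat.antidiagonalTuple_two, sum_map]
  simp only [Equiv.coe_toEmbedding, piFinTwoEquiv_symm_apply, Fin.prod_univ_succ,
    Fin.prod_univ_zero, Fin.cons_zero, Fin.cons_succ, mul_one]
  rw [sum_congr rfl hterm, sum_sub_distrib, sum_add_distrib, hswap,
    Nat.sum_antidiagonal_eq_sum_range_succ_mk, sum_const, Nat.card_antidiagonal, nsmul_eq_mul]
  push_cast
  ring

theorem stmt_16 :
    Filter.Tendsto
      (fun D : ℕ => (Cconst 1 D + (D : ℝ) ^ 2 / 2 - (1 / 2) * (D : ℝ) * Real.log D) / (D : ℝ))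
      Filter.atTop (nhds (-1 + (1 / 2) * Real.log (2 * Real.pi))) := by
  have hlim := (Stirling.tendsto_logFactorialRemainder.sum_range_succ_div.add
    (Stirling.tendsto_log_factorial_div_sub_log.div_const 2)).sub_const (1 / 2)
  convert hlim.congr' ?_ using 2
  · ring
  filter_upwards [eventually_ne_atTop 0] with D hD
  have hD' : (D : ℝ) ≠ 0 := Nat.cast_ne_zero.mpr hD
  have hC : Cconst 1 D = ∑ m ∈ range (D + 1), Stirling.logFactorialRemainder m
      - D * (D + 1) / 2 + log D ! / 2 := by
    rw [Cconst_one_eq, Stirling.sum_range_succ_logFactorialRemainder]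
    ring
  rw [hC]
  field_simp
  ring
end

section
/- Let n ≥ 2 be an integer and let m, D be real numbers with 0 ≤ m ≤ D. Then D^n − n·D^{n−1}·m ≤ (D−m)^n ≤ D^n − n·D^{n−1}·m + ( (n−1)·2^{n−1}·e / (π·√n) )·D^{n−2}·m². -/
/-!
The lower bound is the mean value estimate `Dⁿ - (D - m)ⁿ ≤ m · n · Dⁿ⁻¹`. For the upper bound,
multiplying the second-order bound for `(D - m)ⁿ` by `D - m ≥ 0` yields the one for `(D - m)ⁿ⁺¹`
up to a term `-C(n,2) Dⁿ⁻² m³ ≤ 0`; it then remains to see that `C(n,2) ≤ (n-1) 2ⁿ⁻¹ e / (π √n)`,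
i.e. `π n √n ≤ e 2ⁿ`, which after squaring follows from `2 n³ ≤ 4ⁿ` and `π² ≤ 2 e²`.
-/

open Real

theorem two_mul_cube_le_four_pow (n : ℕ) : 2 * n ^ 3 ≤ 4 ^ n := by
  rcases lt_or_ge n 2 with hn | hn
  · interval_cases n <;> norm_num
  induction n, hn using Nat.le_induction with
  | base => norm_num
  | succ n hn ih =>
    calc 2 * (n + 1) ^ 3 ≤ 4 * (2 * n ^ 3) := by nlinarith [Nat.mul_le_mul hn hn]
      _ ≤ 4 ^ (n + 1) := by rw [pow_succ' 4 n]; exact Nat.mul_le_mul_left 4 ih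

theorem pi_mul_mul_sqrt_le_exp_one_mul_two_pow (n : ℕ) : π * n * √n ≤ exp 1 * 2 ^ n := by
  have hpi_sq : π ^ 2 ≤ 2 * exp 1 ^ 2 := by
    nlinarith [pi_pos, pi_lt_d2, exp_one_gt_d9]
  have hcube : 2 * (n : ℝ) ^ 3 ≤ 4 ^ n := by exact_mod_cast two_mul_cube_le_four_pow n
  rw [← pow_le_pow_iff_left₀ (by positivity) (by positivity) two_ne_zero]
  calc (π * n * √n) ^ 2 = π ^ 2 * (n : ℝ) ^ 3 := by
        rw [mul_pow, mul_pow, sq_sqrt n.cast_nonneg]; ring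
    _ ≤ 2 * exp 1 ^ 2 * (n : ℝ) ^ 3 := by gcongr
    _ ≤ exp 1 ^ 2 * 4 ^ n := by nlinarith [exp_pos 1]
    _ = (exp 1 * 2 ^ n) ^ 2 := by rw [mul_pow, ← pow_mul, pow_mul']; norm_num

theorem mul_sub_one_div_two_le (n : ℕ) :
    (n : ℝ) * (n - 1) / 2 ≤ ((n : ℝ) - 1) * 2 ^ (n - 1) * exp 1 / (π * √n) := by
  obtain _ | k := n
  · simp
  have key := pi_mul_mul_sqrt_le_exp_one_mul_two_pow (k + 1)
  rw [div_le_div_iff₀ two_pos (by positivity)]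
  push_cast at key ⊢
  simp only [add_sub_cancel_right]
  calc ((k : ℝ) + 1) * k * (π * √((k : ℝ) + 1))
      = k * (π * (k + 1) * √((k : ℝ) + 1)) := by ring
    _ ≤ k * (exp 1 * 2 ^ (k + 1)) := by gcongr
    _ = k * 2 ^ k * exp 1 * 2 := by ring

theorem pow_sub_mul_le_sub_pow {m D : ℝ} (hm : 0 ≤ m) (hmD : m ≤ D) (n : ℕ) :
    D ^ n - n * D ^ (n - 1) * m ≤ (D - m) ^ n := by
  have h := (le_abs_self _).trans (abs_pow_sub_pow_le D (D - m) n)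
  rw [sub_sub_cancel, abs_of_nonneg hm, abs_of_nonneg (hm.trans hmD),
    abs_of_nonneg (sub_nonneg.2 hmD), max_eq_left (by linarith)] at h
  linarith

theorem sub_pow_le_pow_sub_mul_add_sq {m D : ℝ} (hm : 0 ≤ m) (hmD : m ≤ D) (n : ℕ) :
    (D - m) ^ n ≤ D ^ n - n * D ^ (n - 1) * m + n * (n - 1) / 2 * D ^ (n - 2) * m ^ 2 := by
  obtain _ | _ | k := n
  · simp
  · simp
  suffices h : ∀ k : ℕ, (D - m) ^ (k + 2) ≤
      D ^ (k + 2) - (k + 2) * D ^ (k + 1) * m + (k + 2) * (k + 1) / 2 * D ^ k * m ^ 2 by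
    convert h k using 4 <;> push_cast <;> ring
  intro k
  induction k with
  | zero => nlinarith
  | succ k ih =>
    have hD : 0 ≤ D := hm.trans hmD
    have hcubic : 0 ≤ ((k : ℝ) + 2) * (k + 1) / 2 * D ^ k * m ^ 3 := by positivity
    calc (D - m) ^ (k + 1 + 2) = (D - m) * (D - m) ^ (k + 2) := by ring
      _ ≤ (D - m) * (D ^ (k + 2) - (k + 2) * D ^ (k + 1) * m
            + (k + 2) * (k + 1) / 2 * D ^ k * m ^ 2) := by gcongr
      _ = D ^ (k + 1 + 2) - ((k + 1 : ℕ) + 2) * D ^ (k + 1 + 1) * m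
            + ((k + 1 : ℕ) + 2) * ((k + 1 : ℕ) + 1) / 2 * D ^ (k + 1) * m ^ 2
            - ((k : ℝ) + 2) * (k + 1) / 2 * D ^ k * m ^ 3 := by push_cast; ring
      _ ≤ _ := by linarith

theorem stmt_18_general (n : ℕ) (m D : ℝ) (hm : 0 ≤ m) (hmD : m ≤ D) :
    D ^ n - (n : ℝ) * D ^ (n - 1) * m ≤ (D - m) ^ n ∧
    (D - m) ^ n ≤ D ^ n - (n : ℝ) * D ^ (n - 1) * m
      + (((n : ℝ) - 1) * 2 ^ (n - 1) * Real.exp 1 / (Real.pi * Real.sqrt n))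
        * D ^ (n - 2) * m ^ 2 := by
  refine ⟨pow_sub_mul_le_sub_pow hm hmD n, ?_⟩
  have hD : 0 ≤ D := hm.trans hmD
  calc (D - m) ^ n ≤ D ^ n - n * D ^ (n - 1) * m + n * (n - 1) / 2 * D ^ (n - 2) * m ^ 2 :=
        sub_pow_le_pow_sub_mul_add_sq hm hmD n
    _ ≤ _ := by gcongr _ + ?_ * _ * _; exact mul_sub_one_div_two_le n

theorem stmt_18 (n : ℕ) (hn : 2 ≤ n) (m D : ℝ) (hm : 0 ≤ m) (hmD : m ≤ D) :
    D ^ n - (n : ℝ) * D ^ (n - 1) * m ≤ (D - m) ^ n ∧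
    (D - m) ^ n ≤ D ^ n - (n : ℝ) * D ^ (n - 1) * m
      + (((n : ℝ) - 1) * 2 ^ (n - 1) * Real.exp 1 / (Real.pi * Real.sqrt n))
        * D ^ (n - 2) * m ^ 2 :=
  stmt_18_general n m D hm hmD
end
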